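/- arXiv:1401.5938 — 2 statements merged into one kernel-verified Lean document; each statement's English description precedes it below -/
import Mathlib

section
/- The function γ defined by γ(r) = r(1 - log r) for 0 < r < 1, γ(r) = r for r ≥ 1, γ(0)=0, is subadditive: γ(|x + y|) ≤ γ(|x|) + γ(|y|) for all real numbers x, y. More generally γ(a + b) ≤ γ(a) + γ(b) for all a, b ≥ 0. -/
noncomputable def gam (r : ℝ) : ℝ := if r < 1 then r * (1 - Real.log r) else r

lemma f_mono : MonotoneOn (fun x : ℝ => x * (1 - Real.log x)) (Set.Icc 0 1) := by
  have hfe : (fun x : ℝ => x * (1 - Real.log x)) = fun x => x - x * Real.log x := by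
    funext x; ring
  rw [hfe]
  apply monotoneOn_of_deriv_nonneg (convex_Icc 0 1)
  · exact (continuous_id.sub Real.continuous_mul_log).continuousOn
  · intro x hx
    rw [interior_Icc] at hx
    exact ((hasDerivAt_id x).sub (Real.hasDerivAt_mul_log (ne_of_gt hx.1))).differentiableAt.differentiableWithinAt
  · intro x hx
    rw [interior_Icc] at hx
    have hd : HasDerivAt (fun x : ℝ => x - x * Real.log x) (1 - (Real.log x + 1)) x :=
      (hasDerivAt_id x).sub (Real.hasDerivAt_mul_log (ne_of_gt hx.1))
    rw [hd.deriv]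
    have : Real.log x ≤ 0 := Real.log_nonpos (le_of_lt hx.1) (le_of_lt hx.2)
    linarith

lemma gam_ge_self {a : ℝ} (ha : 0 ≤ a) : a ≤ gam a := by
  unfold gam
  split_ifs with h
  · have : Real.log a ≤ 0 := Real.log_nonpos ha (le_of_lt h)
    nlinarith
  · exact le_refl a

lemma gam_mono {r s : ℝ} (hr : 0 ≤ r) (hrs : r ≤ s) : gam r ≤ gam s := by
  unfold gam
  split_ifs with h1 h2 h2
  · exact f_mono ⟨hr, le_of_lt h1⟩ ⟨le_trans hr hrs, le_of_lt h2⟩ hrs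
  · calc r * (1 - Real.log r) ≤ 1 * (1 - Real.log 1) :=
          f_mono ⟨hr, le_of_lt h1⟩ ⟨zero_le_one, le_refl 1⟩ (le_of_lt h1)
      _ = 1 := by simp
      _ ≤ s := not_lt.mp h2
  · linarith
  · exact hrs

lemma gam_add {a b : ℝ} (ha : 0 ≤ a) (hb : 0 ≤ b) : gam (a + b) ≤ gam a + gam b := by
  have h0 : gam 0 = 0 := by unfold gam; norm_num
  rcases eq_or_lt_of_le ha with rfl | ha'
  · simp [h0]
  rcases eq_or_lt_of_le hb with rfl | hb'
  · simp [h0]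
  by_cases h : a + b < 1
  · have ha1 : a < 1 := by linarith
    have hb1 : b < 1 := by linarith
    have hla : Real.log a ≤ Real.log (a + b) := Real.log_le_log ha' (by linarith)
    have hlb : Real.log b ≤ Real.log (a + b) := Real.log_le_log hb' (by linarith)
    unfold gam
    rw [if_pos h, if_pos ha1, if_pos hb1]
    nlinarith
  · have : gam (a + b) = a + b := by unfold gam; rw [if_neg h]
    rw [this]
    have := gam_ge_self ha
    have := gam_ge_self hb
    linarith

theorem gam_subadditive :
    (∀ x y : ℝ, gam |x + y| ≤ gam |x| + gam |y|) ∧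
    (∀ a b : ℝ, 0 ≤ a → 0 ≤ b → gam (a + b) ≤ gam a + gam b) := by
  constructor
  · intro x y
    calc gam |x + y| ≤ gam (|x| + |y|) := gam_mono (abs_nonneg _) (abs_add_le x y)
      _ ≤ gam |x| + gam |y| := gam_add (abs_nonneg x) (abs_nonneg y)
  · intro a b ha hb
    exact gam_add ha hb
end

section
/- Under the hypotheses of the iterative inequality lemma (ρⁿ_t ≤ A log(1/ε) ∫₀^t ρ^{n-1}_s ds + εBt for all ε ∈ (0,1), n ≥ 1, with ρⁿ continuous nonnegative on [0,T]), if A·T* < 1 with T* ≤ T, then sup_{t∈[0,T*]} ρⁿ_t → 0 as n → ∞. -/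
/-! Writing `c = A log(1/ε)`, iterating the inequality `n` times (Picard iteration) gives
`sup ρⁿ ≤ sup ρ⁰ (cT*)ⁿ/n! + εBT* e^{cT*}`. The first term vanishes as `n → ∞`, and the second
equals `BT* ε^{1 - AT*}`, which is small for small `ε` precisely because `AT* < 1`. -/

open Real MeasureTheory Filter Set Topology

open scoped Nat

-- `t e^{ct}` is a supersolution of `g(t) = c ∫₀ᵗ g + t`, which keeps the Picard bound below stable.
lemma mul_integral_mul_exp_add_le {c t : ℝ} (hc : 0 ≤ c) (ht : 0 ≤ t) :
    c * (∫ s in (0 : ℝ)..t, s * exp (c * s)) + t ≤ t * exp (c * t) := by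
  have hderiv : ∀ s, HasDerivAt (fun s => s * exp (c * s))
      (exp (c * s) + c * (s * exp (c * s))) s := fun s =>
    ((hasDerivAt_id' s).mul ((hasDerivAt_id' s).const_mul c).exp).congr_deriv (by ring)
  have hftc : ∫ s in (0 : ℝ)..t, (exp (c * s) + c * (s * exp (c * s))) = t * exp (c * t) := by
    rw [intervalIntegral.integral_eq_sub_of_hasDerivAt (fun s _ => hderiv s)
      (by apply Continuous.intervalIntegrable; fun_prop)]
    simp
  have hexp : t ≤ ∫ s in (0 : ℝ)..t, exp (c * s) := by
    calc t = ∫ _ in (0 : ℝ)..t, (1 : ℝ) := by simp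
      _ ≤ ∫ s in (0 : ℝ)..t, exp (c * s) :=
        intervalIntegral.integral_mono_on ht intervalIntegrable_const
          (by apply Continuous.intervalIntegrable; fun_prop)
          fun s hs => one_le_exp (mul_nonneg hc hs.1)
  rw [intervalIntegral.integral_add (by apply Continuous.intervalIntegrable; fun_prop)
    (by apply Continuous.intervalIntegrable; fun_prop),
    intervalIntegral.integral_const_mul] at hftc
  linarith

lemma mul_integral_mul_pow_div_factorial (c t : ℝ) (n : ℕ) :
    c * ∫ s in (0 : ℝ)..t, (c * s) ^ n / n ! = (c * t) ^ (n + 1) / (n + 1)! := by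
  have : (fun s : ℝ => (c * s) ^ n / n !) = fun s => c ^ n / n ! * s ^ n := by
    ext s; ring
  rw [this, intervalIntegral.integral_const_mul, integral_pow, Nat.factorial_succ]
  push_cast
  field_simp
  ring

lemma le_pow_div_factorial_add_mul_exp_of_le_integral {f : ℕ → ℝ → ℝ} {c b M τ : ℝ}
    (hc : 0 ≤ c) (hb : 0 ≤ b) (hf : ∀ n, IntegrableOn (f n) (Icc 0 τ))
    (h0 : ∀ t ∈ Icc 0 τ, f 0 t ≤ M)
    (hrec : ∀ n, ∀ t ∈ Icc 0 τ, f (n + 1) t ≤ c * (∫ s in (0 : ℝ)..t, f n s) + b * t) :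
    ∀ n, ∀ t ∈ Icc 0 τ, f n t ≤ M * ((c * t) ^ n / n !) + b * (t * exp (c * t)) := by
  intro n
  induction n with
  | zero =>
    intro t ht
    have : 0 ≤ b * (t * exp (c * t)) := by have := ht.1; positivity
    simpa using (h0 t ht).trans (le_add_of_nonneg_right this)
  | succ n ih =>
    intro t ht
    have hint : IntervalIntegrable (f n) volume 0 t := by
      refine ((hf n).mono_set ?_).intervalIntegrable
      simpa [uIcc_of_le ht.1] using Icc_subset_Icc_right ht.2
    have hmono : ∫ s in (0 : ℝ)..t, f n s
        ≤ ∫ s in (0 : ℝ)..t, (M * ((c * s) ^ n / n !) + b * (s * exp (c * s))) :=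
      intervalIntegral.integral_mono_on ht.1 hint (by apply Continuous.intervalIntegrable; fun_prop)
        fun s hs => ih s ⟨hs.1, hs.2.trans ht.2⟩
    rw [intervalIntegral.integral_add (by apply Continuous.intervalIntegrable; fun_prop)
      (by apply Continuous.intervalIntegrable; fun_prop), intervalIntegral.integral_const_mul,
      intervalIntegral.integral_const_mul] at hmono
    have hpow := mul_integral_mul_pow_div_factorial c t n
    have hexp := mul_integral_mul_exp_add_le hc ht.1
    calc f (n + 1) t ≤ c * (∫ s in (0 : ℝ)..t, f n s) + b * t := hrec n t ht
      _ ≤ M * (c * ∫ s in (0 : ℝ)..t, (c * s) ^ n / n !)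
          + b * (c * (∫ s in (0 : ℝ)..t, s * exp (c * s)) + t) := by
        nlinarith [mul_le_mul_of_nonneg_left hmono hc]
      _ ≤ M * ((c * t) ^ (n + 1) / (n + 1)!) + b * (t * exp (c * t)) := by
        rw [hpow]; gcongr

lemma sSup_image_Icc_le_of_le_integral {f : ℕ → ℝ → ℝ} {c b τ : ℝ}
    (hc : 0 ≤ c) (hb : 0 ≤ b) (hτ : 0 ≤ τ) (hf : ∀ n, ContinuousOn (f n) (Icc 0 τ))
    (hf0 : ∀ t ∈ Icc 0 τ, 0 ≤ f 0 t)
    (hrec : ∀ n, ∀ t ∈ Icc 0 τ, f (n + 1) t ≤ c * (∫ s in (0 : ℝ)..t, f n s) + b * t) (n : ℕ) :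
    sSup (f n '' Icc 0 τ)
      ≤ sSup (f 0 '' Icc 0 τ) * ((c * τ) ^ n / n !) + b * (τ * exp (c * τ)) := by
  have hbdd : ∀ n, BddAbove (f n '' Icc 0 τ) := fun n =>
    (isCompact_Icc.image_of_continuousOn (hf n)).bddAbove
  have hle_sup : ∀ t ∈ Icc 0 τ, f 0 t ≤ sSup (f 0 '' Icc 0 τ) := fun t ht =>
    le_csSup (hbdd 0) (mem_image_of_mem _ ht)
  have hsup_nonneg : 0 ≤ sSup (f 0 '' Icc 0 τ) :=
    (hf0 0 ⟨le_rfl, hτ⟩).trans (hle_sup 0 ⟨le_rfl, hτ⟩)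
  have hbound := le_pow_div_factorial_add_mul_exp_of_le_integral hc hb
    (fun n => (hf n).integrableOn_Icc) hle_sup hrec n
  refine csSup_le ((nonempty_Icc.2 hτ).image _) ?_
  rintro _ ⟨t, ⟨ht0, htτ⟩, rfl⟩
  calc f n t ≤ sSup (f 0 '' Icc 0 τ) * ((c * t) ^ n / n !) + b * (t * exp (c * t)) :=
        hbound t ⟨ht0, htτ⟩
    _ ≤ sSup (f 0 '' Icc 0 τ) * ((c * τ) ^ n / n !) + b * (τ * exp (c * τ)) := by gcongr

lemma tendsto_mul_exp_mul_log_one_div {a : ℝ} (ha : a < 1) :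
    Tendsto (fun ε => ε * exp (a * log (1 / ε))) (𝓝[>] 0) (𝓝 0) := by
  have hlim : Tendsto (fun ε => exp ((1 - a) * log ε)) (𝓝[>] 0) (𝓝 0) :=
    tendsto_exp_atBot.comp (tendsto_log_nhdsGT_zero.const_mul_atBot (sub_pos.2 ha))
  refine hlim.congr' ?_
  filter_upwards [self_mem_nhdsWithin] with ε (hε : 0 < ε)
  rw [one_div, log_inv, sub_mul, one_mul, sub_eq_add_neg, exp_add, exp_log hε, neg_mul_eq_mul_neg]

lemma tendsto_nhds_zero_of_le_add {u : ℕ → ℝ} {g : ℝ → ℝ} {l : Filter ℝ} [l.NeBot]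
    (hu : ∀ n, 0 ≤ u n) (hg : Tendsto g l (𝓝 0))
    (hbound : ∀ᶠ ε in l, ∃ v : ℕ → ℝ, Tendsto v atTop (𝓝 0) ∧ ∀ n, u n ≤ v n + g ε) :
    Tendsto u atTop (𝓝 0) := by
  refine tendsto_order.2 ⟨fun a ha => Eventually.of_forall fun n => ha.trans_le (hu n),
    fun δ hδ => ?_⟩
  obtain ⟨ε, hgε, v, hv, hle⟩ := ((hg.eventually (gt_mem_nhds (half_pos hδ))).and hbound).exists
  filter_upwards [hv.eventually (gt_mem_nhds (half_pos hδ))] with n hn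
  linarith [hle n]

theorem iterative_inequality_sup_tendsto_zero_general
    (A B T Tstar : ℝ) (hA : 0 < A) (hB : 0 < B)
    (hTstar : 0 < Tstar) (hTstarT : Tstar ≤ T) (hATstar : A * Tstar < 1)
    (ρ : ℕ → ℝ → ℝ)
    (hcont : ∀ n, ContinuousOn (ρ n) (Set.Icc 0 T))
    (hnonneg : ∀ n, ∀ t ∈ Set.Icc (0 : ℝ) T, 0 ≤ ρ n t)
    (hrec : ∀ ε : ℝ, 0 < ε → ε < 1 → ∀ n : ℕ, 1 ≤ n → ∀ t ∈ Set.Icc (0 : ℝ) T,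
      ρ n t ≤ A * Real.log (1 / ε) * (∫ s in (0 : ℝ)..t, ρ (n - 1) s) + ε * B * t) :
    Tendsto (fun n : ℕ => sSup (ρ n '' Set.Icc 0 Tstar)) atTop (nhds 0) := by
  have hsub : Icc 0 Tstar ⊆ Icc 0 T := Icc_subset_Icc_right hTstarT
  have hcont' : ∀ n, ContinuousOn (ρ n) (Icc 0 Tstar) := fun n => (hcont n).mono hsub
  have hsup_nonneg : ∀ n, 0 ≤ sSup (ρ n '' Icc 0 Tstar) := fun n =>
    (hnonneg n 0 (hsub ⟨le_rfl, hTstar.le⟩)).trans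
      (le_csSup (isCompact_Icc.image_of_continuousOn (hcont' n)).bddAbove
        (mem_image_of_mem _ ⟨le_rfl, hTstar.le⟩))
  refine tendsto_nhds_zero_of_le_add (g := fun ε => B * Tstar * (ε * exp (A * Tstar * log (1 / ε))))
    hsup_nonneg (by simpa only [mul_zero] using
      (tendsto_mul_exp_mul_log_one_div hATstar).const_mul (B * Tstar)) ?_
  filter_upwards [Ioo_mem_nhdsGT one_pos] with ε ⟨hε0, hε1⟩
  have hc : 0 ≤ A * log (1 / ε) := mul_nonneg hA.le (log_nonneg (one_le_one_div hε0 hε1.le))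
  have hsup := sSup_image_Icc_le_of_le_integral hc (mul_nonneg hε0.le hB.le) hTstar.le hcont'
    (fun t ht => hnonneg 0 t (hsub ht)) fun n t ht => by
      simpa only [Nat.add_sub_cancel] using hrec ε hε0 hε1 (n + 1) (by omega) t (hsub ht)
  refine ⟨fun n => sSup (ρ 0 '' Icc 0 Tstar) * ((A * log (1 / ε) * Tstar) ^ n / n !), ?_,
    fun n => (hsup n).trans_eq (by ring_nf)⟩
  simpa using (FloorSemiring.tendsto_pow_div_factorial_atTop (A * log (1 / ε) * Tstar)).const_mul
    (sSup (ρ 0 '' Icc 0 Tstar))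

theorem iterative_inequality_sup_tendsto_zero
    (A B T Tstar : ℝ) (hA : 0 < A) (hB : 0 < B) (hT : 0 < T)
    (hTstar : 0 < Tstar) (hTstarT : Tstar ≤ T) (hATstar : A * Tstar < 1)
    (ρ : ℕ → ℝ → ℝ)
    (hcont : ∀ n, ContinuousOn (ρ n) (Set.Icc 0 T))
    (hnonneg : ∀ n, ∀ t ∈ Set.Icc (0 : ℝ) T, 0 ≤ ρ n t)
    (hrec : ∀ ε : ℝ, 0 < ε → ε < 1 → ∀ n : ℕ, 1 ≤ n → ∀ t ∈ Set.Icc (0 : ℝ) T,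
      ρ n t ≤ A * Real.log (1 / ε) * (∫ s in (0 : ℝ)..t, ρ (n - 1) s) + ε * B * t) :
    Tendsto (fun n : ℕ => sSup (ρ n '' Set.Icc 0 Tstar)) atTop (nhds 0) :=
  iterative_inequality_sup_tendsto_zero_general A B T Tstar hA hB hTstar hTstarT hATstar ρ hcont
    hnonneg hrec
end
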